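/- Fix d ≥ 1 and mesh steps Δx_1, …, Δx_d > 0, and let (α_J)_{J∈ℤ^d} be the interpolation weights. Then for every y ∈ ℝ^d: Σ_{J∈ℤ^d} α_J(y) = 1 and Σ_{J∈ℤ^d} x_J α_J(y) = y (both sums having only finitely many nonzero terms). -/

import Mathlib

open MeasureTheory Real Set
open scoped RealInnerProductSpace ENNReal

noncomputable section

/-- `ℝ^d` with the Euclidean structure. -/
abbrev Euc (d : ℕ) := EuclideanSpace ℝ (Fin d)

open Classical in
/-- `∇̂W`: the gradient of `W` away from `0`, and `0` at `0`. -/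
def hatGrad {d : ℕ} (W : Euc d → ℝ) (x : Euc d) : Euc d :=
  if x = 0 then 0 else gradient W x

/-- Positive part `r⁺ = max(r,0)`. -/
def pos (r : ℝ) : ℝ := max r 0

/-- Negative part `r⁻ = max(-r,0)`. -/
def neg (r : ℝ) : ℝ := max (-r) 0

/-- The node `x_J = (J_1 Δx_1, …, J_d Δx_d)`. -/
def node {d : ℕ} (Δx : Fin d → ℝ) (J : Fin d → ℤ) : Euc d :=
  (EuclideanSpace.equiv (Fin d) ℝ).symm (fun i => (J i : ℝ) * Δx i)

/-- The cell `C_J = Π_i [(J_i - 1/2)Δx_i, (J_i + 1/2)Δx_i)`. -/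
def cell {d : ℕ} (Δx : Fin d → ℝ) (J : Fin d → ℤ) : Set (Euc d) :=
  {y | ∀ i, ((J i : ℝ) - 1/2) * Δx i ≤ y i ∧ y i < ((J i : ℝ) + 1/2) * Δx i}

open Classical in
/-- The interpolation weight `α_J(y)`: since the cells `(C_L)` are pairwise disjoint, at most
one of the summands below is nonzero, and this agrees with the case-by-case definition:
`1 - Σ_i |⟨y - x_J, e_i⟩|/Δx_i` if `y ∈ C_J`; `(⟨y - x_{J∓e_i}, e_i⟩)^±/Δx_i` if
`y ∈ C_{J∓e_i}`; and `0` otherwise. -/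
def interpWeight {d : ℕ} (Δx : Fin d → ℝ) (J : Fin d → ℤ) (y : Euc d) : ℝ :=
  (if y ∈ cell Δx J then 1 - ∑ i, |y i - node Δx J i| / Δx i else 0)
    + ∑ i : Fin d,
      ((if y ∈ cell Δx (J - Pi.single i 1) then
          pos (y i - node Δx (J - Pi.single i 1) i) / Δx i else 0)
        + (if y ∈ cell Δx (J + Pi.single i 1) then
            neg (y i - node Δx (J + Pi.single i 1) i) / Δx i else 0))

/-!
The point `y` lies in exactly one cell `C_K`, where `K_i = ⌊y_i/Δx_i + 1/2⌋`. Writing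
`t_i = (y_i - (x_K)_i)/Δx_i`, the weights `α_•(y)` are the point masses `1 - Σ_i |t_i|` at `K`,
`t_i⁺` at `K + e_i` and `t_i⁻` at `K - e_i`. They sum to `1` because `t⁺ + t⁻ = |t|`, and since
`x_{K ± e_i} = x_K ± Δx_i e_i` their barycentre is `x_K + Σ_i (t_i⁺ - t_i⁻) Δx_i e_i = y`.
-/

lemma pos_add_neg (r : ℝ) : pos r + neg r = |r| := max_zero_add_max_neg_zero_eq_abs_self r

lemma pos_sub_neg (r : ℝ) : pos r - neg r = r := max_zero_sub_max_neg_zero_eq_self r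

lemma Finsupp.hasSum_linearCombination {ι R M : Type*} [Semiring R] [AddCommMonoid M] [Module R M]
    [TopologicalSpace M] (f : ι →₀ R) (g : ι → M) :
    HasSum (fun i => f i • g i) (Finsupp.linearCombination R g f) := by
  rw [Finsupp.linearCombination_apply]
  exact hasSum_sum_of_ne_finset_zero fun i hi => by simp [Finsupp.notMem_support_iff.mp hi]

section

variable {d : ℕ} (Δx : Fin d → ℝ)

lemma node_apply (J : Fin d → ℤ) (i : Fin d) : node Δx J i = (J i : ℝ) * Δx i := rfl

lemma node_add (J L : Fin d → ℤ) : node Δx (J + L) = node Δx J + node Δx L := by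
  ext i; simp [node_apply, add_mul]

lemma node_sub (J L : Fin d → ℤ) : node Δx (J - L) = node Δx J - node Δx L := by
  ext i; simp [node_apply, sub_mul]

def cellIndex (y : Euc d) : Fin d → ℤ := fun i => ⌊y i / Δx i + 1 / 2⌋

variable {Δx}

lemma mem_cell_iff_eq_cellIndex (hΔx : ∀ i, 0 < Δx i) {y : Euc d} {J : Fin d → ℤ} :
    y ∈ cell Δx J ↔ J = cellIndex Δx y := by
  simp only [cell, Set.mem_ofPred_eq, funext_iff, cellIndex, eq_comm (a := J _), Int.floor_eq_iff]
  refine forall_congr' fun i => ?_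
  rw [← le_div_iff₀ (hΔx i), ← div_lt_iff₀ (hΔx i)]
  constructor <;> rintro ⟨h₁, h₂⟩ <;> constructor <;> linarith

variable (Δx)

def stencilWeights (y : Euc d) : (Fin d → ℤ) →₀ ℝ :=
  let K := cellIndex Δx y
  Finsupp.single K (1 - ∑ i, |y i - node Δx K i| / Δx i) +
    ∑ i, (Finsupp.single (K + Pi.single i 1) (pos (y i - node Δx K i) / Δx i) +
      Finsupp.single (K - Pi.single i 1) (neg (y i - node Δx K i) / Δx i))

lemma stencilWeights_apply (hΔx : ∀ i, 0 < Δx i) (y : Euc d) (J : Fin d → ℤ) :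
    stencilWeights Δx y J = interpWeight Δx J y := by
  simp only [stencilWeights, interpWeight, mem_cell_iff_eq_cellIndex hΔx, Finsupp.add_apply,
    Finsupp.finsetSum_apply, Finsupp.single_apply]
  congr 1
  · by_cases h : J = cellIndex Δx y
    · simp [h]
    · simp [h, Ne.symm h]
  refine Finset.sum_congr rfl fun i _ => ?_
  congr 1
  · by_cases h : J - Pi.single i 1 = cellIndex Δx y
    · simp [← h]
    · have h' : cellIndex Δx y + Pi.single i 1 ≠ J := fun h' => h (by rw [← h']; abel)
      simp [h, h']
  · by_cases h : J + Pi.single i 1 = cellIndex Δx y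
    · simp [← h]
    · have h' : cellIndex Δx y - Pi.single i 1 ≠ J := fun h' => h (by rw [← h']; abel)
      simp [h, h']

lemma linearCombination_one_stencilWeights (y : Euc d) :
    Finsupp.linearCombination ℝ (fun _ => (1 : ℝ)) (stencilWeights Δx y) = 1 := by
  simp only [stencilWeights, map_add, map_sum, Finsupp.linearCombination_single, smul_eq_mul,
    mul_one, ← add_div, pos_add_neg]
  ring

lemma linearCombination_node_stencilWeights (hΔx : ∀ i, Δx i ≠ 0) (y : Euc d) :
    Finsupp.linearCombination ℝ (node Δx) (stencilWeights Δx y) = y := by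
  set K := cellIndex Δx y
  set p : Fin d → ℝ := fun i => pos (y i - node Δx K i) / Δx i
  set n : Fin d → ℝ := fun i => neg (y i - node Δx K i) / Δx i
  have hpn (i : Fin d) : p i + n i = |y i - node Δx K i| / Δx i := by
    simp only [p, n, ← add_div, pos_add_neg]
  calc Finsupp.linearCombination ℝ (node Δx) (stencilWeights Δx y)
      = (1 - ∑ i, (p i + n i)) • node Δx K +
          ∑ i, (p i • node Δx (K + Pi.single i 1) + n i • node Δx (K - Pi.single i 1)) := by
        simp only [stencilWeights, map_add, map_sum, Finsupp.linearCombination_single, hpn]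
        rfl
    _ = node Δx K + ∑ i, (p i - n i) • node Δx (Pi.single i 1) := by
        have step (i : Fin d) :
            p i • node Δx (K + Pi.single i 1) + n i • node Δx (K - Pi.single i 1) =
              (p i + n i) • node Δx K + (p i - n i) • node Δx (Pi.single i 1) := by
          rw [node_add, node_sub]
          module
        rw [Finset.sum_congr rfl fun i _ => step i,
          Finset.sum_add_distrib (f := fun i => (p i + n i) • node Δx K), ← Finset.sum_smul]
        module
    _ = y := by
        ext j
        simp only [node_apply, PiLp.add_apply, WithLp.ofLp_sum, WithLp.ofLp_smul, Finset.sum_apply,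
          Pi.smul_apply, Pi.single_apply, Int.cast_ite, Int.cast_one, Int.cast_zero, ite_mul,
          one_mul, zero_mul, smul_eq_mul, mul_ite, mul_zero, Finset.sum_ite_eq, Finset.mem_univ,
          ↓reduceIte, p, n]
        rw [← sub_div, pos_sub_neg, div_mul_cancel₀ _ (hΔx j)]
        ring

end

theorem stmt10_general {d : ℕ} (Δx : Fin d → ℝ) (hΔx : ∀ i, 0 < Δx i) :
    ∀ y : Euc d,
      (Function.support (fun J : Fin d → ℤ => interpWeight Δx J y)).Finite ∧
      HasSum (fun J : Fin d → ℤ => interpWeight Δx J y) 1 ∧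
      HasSum (fun J : Fin d → ℤ => interpWeight Δx J y • node Δx J) y := by
  intro y
  simp only [← stencilWeights_apply Δx hΔx y]
  refine ⟨(stencilWeights Δx y).hasFiniteSupport, ?_, ?_⟩
  · simpa [linearCombination_one_stencilWeights] using
      Finsupp.hasSum_linearCombination (stencilWeights Δx y) (fun _ => (1 : ℝ))
  · simpa [linearCombination_node_stencilWeights Δx fun i => (hΔx i).ne'] using
      Finsupp.hasSum_linearCombination (stencilWeights Δx y) (node Δx)

/-- The interpolation weights sum to `1` and reproduce the point `y`, with only
finitely many nonzero terms. -/
theorem stmt10 {d : ℕ} (hd : 1 ≤ d) (Δx : Fin d → ℝ) (hΔx : ∀ i, 0 < Δx i) :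
    ∀ y : Euc d,
      (Function.support (fun J : Fin d → ℤ => interpWeight Δx J y)).Finite ∧
      HasSum (fun J : Fin d → ℤ => interpWeight Δx J y) 1 ∧
      HasSum (fun J : Fin d → ℤ => interpWeight Δx J y • node Δx J) y :=
  stmt10_general Δx hΔx
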